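/- Let f, g ∈ R[t][∂;'] with deg_∂ f = m, deg_∂ g = n, deg_t f ≤ d, deg_t g ≤ d. If deg_∂ gcrd(f,g) ≥ 1, then there exists a nonzero w ∈ R[t]^{1×(m+n)} with wV(f,g) = 0 and deg_t w ≤ 2(m+n)d. -/

import Mathlib

/-!
Let `h` be a common right divisor of `f` and `g` of order at least one. Over `ℝ(t)`, row `i` of
`V(f, g)` is the coefficient vector of `∂ⁱ f` or `∂ⁱ g`, an operator of order `< m + n` of the form
`u h` with `ord u < m + n - 1`; so all `m + n` rows lie in the span of `h, ∂h, …, ∂^(m+n-2) h` and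
`det V = 0`. A singular polynomial matrix with entries of degree `≤ d` has a left null vector made
of signed maximal minors (Cramer's rule), whose entries have degree `≤ (m + n) d`.
-/

open Polynomial

/-- Derivative d/dt on the field of real rational functions. -/
noncomputable def ratDeriv (q : RatFunc ℝ) : RatFunc ℝ :=
  (algebraMap (Polynomial ℝ) (RatFunc ℝ) (derivative q.num) *
      algebraMap (Polynomial ℝ) (RatFunc ℝ) q.denom -
    algebraMap (Polynomial ℝ) (RatFunc ℝ) q.num *
      algebraMap (Polynomial ℝ) (RatFunc ℝ) (derivative q.denom)) /
    (algebraMap (Polynomial ℝ) (RatFunc ℝ) q.denom) ^ 2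

/-- Left multiplication by ∂ in R(t)[∂;′]. -/
noncomputable def dMul (g : Polynomial (RatFunc ℝ)) : Polynomial (RatFunc ℝ) :=
  X * g + g.sum fun i a => C (ratDeriv a) * X ^ i

/-- The skew (Ore) multiplication in R(t)[∂;′]. -/
noncomputable def skewMul (f g : Polynomial (RatFunc ℝ)) : Polynomial (RatFunc ℝ) :=
  f.sum fun i a => C a * dMul^[i] g

/-- h divides f on the right in R(t)[∂;′]. -/
def SkewRightDvd (h f : Polynomial (RatFunc ℝ)) : Prop := ∃ u, f = skewMul u h

/-- h is a greatest common right divisor of f and g. -/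
def IsGCRD (f g h : Polynomial (RatFunc ℝ)) : Prop :=
  SkewRightDvd h f ∧ SkewRightDvd h g ∧
    ∀ h2, SkewRightDvd h2 f → SkewRightDvd h2 g → h2.degree ≤ h.degree

/-- Left multiplication by ∂ in R[t][∂;′]. -/
noncomputable def dMulP (g : Polynomial (Polynomial ℝ)) : Polynomial (Polynomial ℝ) :=
  X * g + g.sum fun i a => C (derivative a) * X ^ i

/-- The differential Sylvester matrix of f, g ∈ R[t][∂;′] over R[t]. -/
noncomputable def sylvP (f g : Polynomial (Polynomial ℝ)) (m n : ℕ) :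
    Matrix (Fin (m + n)) (Fin (m + n)) (Polynomial ℝ) :=
  Matrix.of fun i j =>
    if (i : ℕ) < n then (dMulP^[(i : ℕ)] f).coeff j
    else (dMulP^[(i : ℕ) - n] g).coeff j

/-- Embedding R[t][∂;′] into R(t)[∂;′]. -/
noncomputable def toRat (f : Polynomial (Polynomial ℝ)) : Polynomial (RatFunc ℝ) :=
  f.map (algebraMap (Polynomial ℝ) (RatFunc ℝ))

theorem LinearIndependent.card_le_of_forall_mem_span {K V ι κ : Type*} [DivisionRing K]
    [AddCommGroup V] [Module K V] [Fintype ι] [Fintype κ] {v : ι → V} (hv : LinearIndependent K v)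
    {w : κ → V} (hvw : ∀ i, v i ∈ Submodule.span K (Set.range w)) :
    Fintype.card ι ≤ Fintype.card κ :=
  haveI := FiniteDimensional.span_of_finite K (Set.finite_range w)
  calc Fintype.card ι = Module.finrank K (Submodule.span K (Set.range v)) :=
        (finrank_span_eq_card hv).symm
    _ ≤ Module.finrank K (Submodule.span K (Set.range w)) :=
        Submodule.finrank_mono (Submodule.span_le.2 (Set.range_subset_iff.2 hvw))
    _ ≤ Fintype.card κ := finrank_range_le_card w

namespace Matrix

variable {R : Type*} [CommRing R]

theorem natDegree_det_le {n : Type*} [Fintype n] [DecidableEq n] (M : Matrix n n R[X]) {d : ℕ}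
    (hM : ∀ i j, (M i j).natDegree ≤ d) : M.det.natDegree ≤ Fintype.card n * d := by
  rw [det_apply]
  refine natDegree_sum_le_of_forall_le _ _ fun σ _ => ?_
  rw [Units.smul_def]
  refine (natDegree_smul_le _ _).trans ((natDegree_prod_le _ _).trans ?_)
  calc ∑ i, (M (σ i) i).natDegree ≤ ∑ _i : n, d := Finset.sum_le_sum fun i _ => hM (σ i) i
    _ = Fintype.card n * d := by simp

theorem injective_of_det_submatrix_ne_zero {m n : Type*} [Fintype m] [DecidableEq m]
    (M : Matrix m n R) {J : m → n} (hJ : (M.submatrix id J).det ≠ 0) : Function.Injective J := by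
  intro a b hab
  by_contra hne
  exact hJ (det_zero_of_column_eq hne fun i => by simp [hab])

/-- The cofactors along the last column of `M.submatrix id (Fin.snoc J j)`, which do not
depend on `j`. -/
def signedMinors {s k : ℕ} (M : Matrix (Fin (s + 1)) (Fin k) R) (J : Fin s → Fin k) :
    Fin (s + 1) → R :=
  fun i => (-1) ^ ((i : ℕ) + s) * (M.submatrix i.succAbove J).det

theorem vecMul_signedMinors {s k : ℕ} (M : Matrix (Fin (s + 1)) (Fin k) R) (J : Fin s → Fin k)
    (j : Fin k) : (signedMinors M J ᵥ* M) j = (M.submatrix id (Fin.snoc J j)).det := by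
  rw [det_succ_column (M.submatrix id (Fin.snoc J j)) (Fin.last s), vecMul, dotProduct]
  refine Finset.sum_congr rfl fun i _ => ?_
  have hminor : (M.submatrix id (Fin.snoc J j)).submatrix i.succAbove (Fin.last s).succAbove =
      M.submatrix i.succAbove J := by
    ext a b
    simp [Fin.succAbove_last]
  simp only [signedMinors, hminor, Fin.val_last, submatrix_apply, id, Fin.snoc_last]
  ring

theorem signedMinors_last {s k : ℕ} (M : Matrix (Fin (s + 1)) (Fin k) R) (J : Fin s → Fin k) :
    signedMinors M J (Fin.last s) = (M.submatrix Fin.castSucc J).det := by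
  simp [signedMinors, Fin.succAbove_last, ← two_mul, pow_mul]

theorem natDegree_signedMinors_le {s k d : ℕ} (M : Matrix (Fin (s + 1)) (Fin k) R[X])
    (hM : ∀ i j, (M i j).natDegree ≤ d) (J : Fin s → Fin k) (i : Fin (s + 1)) :
    (signedMinors M J i).natDegree ≤ s * d := by
  rw [signedMinors, ← C_1, ← C_neg, ← C_pow]
  refine (natDegree_C_mul_le _ _).trans ?_
  simpa using natDegree_det_le (M.submatrix i.succAbove J) fun _ _ => hM _ _

theorem snoc_zero_vecMul {s : ℕ} {n : Type*} [Fintype n] (w : Fin s → R)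
    (M : Matrix (Fin (s + 1)) n R) : Fin.snoc w 0 ᵥ* M = w ᵥ* M.submatrix Fin.castSucc id := by
  ext j
  simp [vecMul, dotProduct, Fin.sum_univ_castSucc]

theorem exists_det_submatrix_ne_zero_or_exists_vecMul_eq_zero [Nontrivial R] {d : ℕ} :
    ∀ {s k : ℕ} (M : Matrix (Fin s) (Fin k) R[X]), (∀ i j, (M i j).natDegree ≤ d) →
      (∃ J : Fin s → Fin k, (M.submatrix id J).det ≠ 0) ∨
        ∃ w ≠ 0, w ᵥ* M = 0 ∧ ∀ i, (w i).natDegree ≤ s * d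
  | 0, _, M, _ => .inl ⟨Fin.elim0, by simp⟩
  | s + 1, k, M, hM => by
    rcases exists_det_submatrix_ne_zero_or_exists_vecMul_eq_zero (M.submatrix Fin.castSucc id)
      fun _ _ => hM _ _ with ⟨J, hJ⟩ | ⟨w, hw₀, hwM, hwd⟩
    · by_cases hall : ∀ j, (M.submatrix id (Fin.snoc J j)).det = 0
      · refine .inr ⟨signedMinors M J, fun h => hJ ?_, ?_, fun i => ?_⟩
        · simpa [signedMinors_last] using congrFun h (Fin.last s)
        · ext j
          rw [vecMul_signedMinors, hall, Pi.zero_apply]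
        · exact (natDegree_signedMinors_le M hM J i).trans (Nat.mul_le_mul_right d s.le_succ)
      · push Not at hall
        obtain ⟨j, hj⟩ := hall
        exact .inl ⟨Fin.snoc J j, hj⟩
    · refine .inr ⟨Fin.snoc w 0, fun h => hw₀ ?_, by rw [snoc_zero_vecMul, hwM], fun i => ?_⟩
      · funext i
        simpa using congrFun h i.castSucc
      · rcases Fin.eq_castSucc_or_eq_last i with ⟨i, rfl⟩ | rfl
        · simpa using (hwd i).trans (Nat.mul_le_mul_right d s.le_succ)
        · simp

theorem exists_vecMul_eq_zero_natDegree_le_of_det_eq_zero [Nontrivial R] {s d : ℕ}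
    (M : Matrix (Fin s) (Fin s) R[X]) (hM : ∀ i j, (M i j).natDegree ≤ d) (hdet : M.det = 0) :
    ∃ w ≠ 0, w ᵥ* M = 0 ∧ ∀ i, (w i).natDegree ≤ s * d := by
  refine (exists_det_submatrix_ne_zero_or_exists_vecMul_eq_zero M hM).resolve_left ?_
  rintro ⟨J, hJ⟩
  let σ := Equiv.ofBijective J (injective_of_det_submatrix_ne_zero M hJ).bijective_of_finite
  have hσ := det_permute' σ M
  rw [hdet, mul_zero] at hσ
  exact hJ hσ

end Matrix

lemma Polynomial.coeff_sum_C_mul_X_pow {A : Type*} [Semiring A] (δ : A → A) (hδ : δ 0 = 0)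
    (g : A[X]) (j : ℕ) : (g.sum fun i a => C (δ a) * X ^ i).coeff j = δ (g.coeff j) := by
  rw [Polynomial.sum_def, finsetSum_coeff]
  simp_rw [coeff_C_mul_X_pow]
  rw [Finset.sum_ite_eq]
  split_ifs with hj
  · rfl
  · rw [notMem_support_iff.1 hj, hδ]

local notation "φ" => algebraMap ℝ[X] (RatFunc ℝ)

open RatFunc in
lemma ratDeriv_div_algebraMap (p q : ℝ[X]) (hq : q ≠ 0) :
    ratDeriv (φ p / φ q) = (φ (derivative p) * φ q - φ p * φ (derivative q)) / φ q ^ 2 := by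
  set a := φ p / φ q
  have hcross : a.num * q = p * a.denom := by
    have h := num_div_denom a
    rw [div_eq_div_iff (algebraMap_ne_zero a.denom_ne_zero) (algebraMap_ne_zero hq)] at h
    exact IsFractionRing.injective ℝ[X] (RatFunc ℝ) (by simpa using h)
  have hcross' := congrArg derivative hcross
  simp only [derivative_mul] at hcross'
  rw [ratDeriv, div_eq_div_iff (pow_ne_zero _ (algebraMap_ne_zero a.denom_ne_zero))
    (pow_ne_zero _ (algebraMap_ne_zero hq))]
  simp only [← map_mul, ← map_sub, ← map_pow]
  congr 1
  linear_combination (a.denom * q) * hcross' -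
    (derivative a.denom * q + derivative q * a.denom) * hcross

lemma ratDeriv_algebraMap (p : ℝ[X]) : ratDeriv (φ p) = φ (derivative p) := by
  simpa using ratDeriv_div_algebraMap p 1 one_ne_zero

lemma ratDeriv_zero : ratDeriv 0 = 0 := by
  simpa using ratDeriv_algebraMap 0

open RatFunc in
lemma ratDeriv_add (a b : RatFunc ℝ) : ratDeriv (a + b) = ratDeriv a + ratDeriv b := by
  obtain ⟨p, q, hq, rfl⟩ := IsFractionRing.div_surjective (A := ℝ[X]) a
  obtain ⟨r, s, hs, rfl⟩ := IsFractionRing.div_surjective (A := ℝ[X]) b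
  have hq₀ := nonZeroDivisors.ne_zero hq
  have hs₀ := nonZeroDivisors.ne_zero hs
  have hsum : φ p / φ q + φ r / φ s = φ (p * s + r * q) / φ (q * s) := by
    field_simp [algebraMap_ne_zero hq₀, algebraMap_ne_zero hs₀]
    simp only [map_add, map_mul]
    ring
  rw [hsum, ratDeriv_div_algebraMap _ _ (mul_ne_zero hq₀ hs₀), ratDeriv_div_algebraMap _ _ hq₀,
    ratDeriv_div_algebraMap _ _ hs₀]
  simp only [derivative_mul, map_add, map_mul]
  field_simp [algebraMap_ne_zero hq₀, algebraMap_ne_zero hs₀]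
  ring

open RatFunc in
lemma ratDeriv_mul (a b : RatFunc ℝ) : ratDeriv (a * b) = ratDeriv a * b + a * ratDeriv b := by
  obtain ⟨p, q, hq, rfl⟩ := IsFractionRing.div_surjective (A := ℝ[X]) a
  obtain ⟨r, s, hs, rfl⟩ := IsFractionRing.div_surjective (A := ℝ[X]) b
  have hq₀ := nonZeroDivisors.ne_zero hq
  have hs₀ := nonZeroDivisors.ne_zero hs
  rw [div_mul_div_comm, ← map_mul, ← map_mul, ratDeriv_div_algebraMap _ _ (mul_ne_zero hq₀ hs₀),
    ratDeriv_div_algebraMap _ _ hq₀, ratDeriv_div_algebraMap _ _ hs₀]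
  simp only [derivative_mul, map_add, map_mul]
  field_simp [algebraMap_ne_zero hq₀, algebraMap_ne_zero hs₀]
  ring

lemma coeff_dMul (g : (RatFunc ℝ)[X]) (j : ℕ) :
    (dMul g).coeff j = (X * g).coeff j + ratDeriv (g.coeff j) := by
  rw [dMul, coeff_add, coeff_sum_C_mul_X_pow _ ratDeriv_zero]

lemma coeff_dMulP (g : ℝ[X][X]) (j : ℕ) :
    (dMulP g).coeff j = (X * g).coeff j + derivative (g.coeff j) := by
  rw [dMulP, coeff_add, coeff_sum_C_mul_X_pow _ (derivative_zero)]

lemma dMul_add (p q : (RatFunc ℝ)[X]) : dMul (p + q) = dMul p + dMul q := by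
  ext j
  simp only [coeff_dMul, coeff_add, mul_add, ratDeriv_add]
  ring

lemma dMul_C_mul (a : RatFunc ℝ) (p : (RatFunc ℝ)[X]) :
    dMul (C a * p) = C (ratDeriv a) * p + C a * dMul p := by
  ext j
  simp only [coeff_dMul, coeff_add, coeff_C_mul, mul_left_comm X, ratDeriv_mul]
  ring

lemma dMul_monomial (i : ℕ) (a : RatFunc ℝ) :
    dMul (monomial i a) = monomial (i + 1) a + monomial i (ratDeriv a) := by
  ext j
  rw [coeff_dMul, X_mul_monomial, coeff_add, coeff_monomial, coeff_monomial, coeff_monomial]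
  split_ifs <;> simp [ratDeriv_zero]

lemma skewMul_add_left (p q h : (RatFunc ℝ)[X]) :
    skewMul (p + q) h = skewMul p h + skewMul q h :=
  sum_add_index _ _ _ (fun _ => by simp) fun _ _ _ => by simp [add_mul]

lemma skewMul_monomial (i : ℕ) (a : RatFunc ℝ) (h : (RatFunc ℝ)[X]) :
    skewMul (monomial i a) h = C a * dMul^[i] h :=
  sum_monomial_index _ _ (by simp)

lemma dMul_skewMul (u h : (RatFunc ℝ)[X]) : dMul (skewMul u h) = skewMul (dMul u) h := by
  induction u using Polynomial.induction_on' with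
  | add p q hp hq => rw [skewMul_add_left, dMul_add, hp, hq, dMul_add, skewMul_add_left]
  | monomial i a =>
    rw [skewMul_monomial, dMul_C_mul, dMul_monomial, skewMul_add_left, skewMul_monomial,
      skewMul_monomial, Function.iterate_succ_apply']
    ring

lemma SkewRightDvd.dMul_iterate {h p : (RatFunc ℝ)[X]} (hp : SkewRightDvd h p) (i : ℕ) :
    SkewRightDvd h (dMul^[i] p) := by
  induction i with
  | zero => exact hp
  | succ i ih =>
    obtain ⟨u, hu⟩ := ih
    exact ⟨dMul u, by rw [Function.iterate_succ_apply', hu, dMul_skewMul]⟩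

lemma natDegree_dMul_le {g : (RatFunc ℝ)[X]} {N : ℕ} (hg : g.natDegree ≤ N) :
    (dMul g).natDegree ≤ N + 1 := by
  rw [natDegree_le_iff_coeff_eq_zero]
  intro j hj
  have hXg : (X * g).natDegree < j := (natDegree_mul_le.trans (by simp; omega)).trans_lt hj
  rw [coeff_dMul, coeff_eq_zero_of_natDegree_lt hXg,
    coeff_eq_zero_of_natDegree_lt (p := g) (by omega), ratDeriv_zero, add_zero]

lemma coeff_dMul_succ {g : (RatFunc ℝ)[X]} {N : ℕ} (hg : g.natDegree ≤ N) :
    (dMul g).coeff (N + 1) = g.coeff N := by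
  rw [coeff_dMul, coeff_X_mul, coeff_eq_zero_of_natDegree_lt (n := N + 1) (by omega), ratDeriv_zero,
    add_zero]

lemma natDegree_dMul_iterate_le {g : (RatFunc ℝ)[X]} {N : ℕ} (hg : g.natDegree ≤ N) (i : ℕ) :
    (dMul^[i] g).natDegree ≤ N + i := by
  induction i with
  | zero => exact hg
  | succ i ih => rw [Function.iterate_succ_apply']; exact natDegree_dMul_le ih

lemma coeff_dMul_iterate {g : (RatFunc ℝ)[X]} {N : ℕ} (hg : g.natDegree ≤ N) (i : ℕ) :
    (dMul^[i] g).coeff (N + i) = g.coeff N := by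
  induction i with
  | zero => rfl
  | succ i ih =>
    rw [Function.iterate_succ_apply', ← add_assoc,
      coeff_dMul_succ (natDegree_dMul_iterate_le hg i), ih]

lemma skewMul_eq_sum_range (u h : (RatFunc ℝ)[X]) {k : ℕ} (hk : u.natDegree < k) :
    skewMul u h = ∑ i ∈ Finset.range k, u.coeff i • dMul^[i] h := by
  simp_rw [smul_eq_C_mul]
  exact sum_over_range' u (fun _ => by simp) k hk

lemma coeff_skewMul_natDegree_add (u h : (RatFunc ℝ)[X]) :
    (skewMul u h).coeff (u.natDegree + h.natDegree) = u.leadingCoeff * h.leadingCoeff := by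
  rw [skewMul_eq_sum_range u h (Nat.lt_succ_self _), Finset.sum_range_succ, coeff_add,
    finsetSum_coeff, Finset.sum_eq_zero, zero_add, coeff_smul, add_comm, coeff_dMul_iterate le_rfl]
  · rfl
  intro i hi
  have hlt : (dMul^[i] h).natDegree < u.natDegree + h.natDegree :=
    (natDegree_dMul_iterate_le le_rfl i).trans_lt (by simp at hi; omega)
  rw [coeff_smul, coeff_eq_zero_of_natDegree_lt hlt, smul_zero]

lemma natDegree_add_le_natDegree_skewMul {u h : (RatFunc ℝ)[X]} (hu : u ≠ 0) (hh : h ≠ 0) :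
    u.natDegree + h.natDegree ≤ (skewMul u h).natDegree := by
  apply le_natDegree_of_ne_zero
  rw [coeff_skewMul_natDegree_add]
  exact mul_ne_zero (leadingCoeff_ne_zero.2 hu) (leadingCoeff_ne_zero.2 hh)

lemma SkewRightDvd.natDegree_le {h p : (RatFunc ℝ)[X]} (hp : SkewRightDvd h p) (hp₀ : p ≠ 0) :
    h.natDegree ≤ p.natDegree := by
  obtain ⟨u, rfl⟩ := hp
  rcases eq_or_ne h 0 with rfl | hh
  · simp
  have hu : u ≠ 0 := by rintro rfl; exact hp₀ (sum_zero_index _)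
  exact (Nat.le_add_left _ _).trans (natDegree_add_le_natDegree_skewMul hu hh)

lemma SkewRightDvd.mem_span_dMul_iterate {h p : (RatFunc ℝ)[X]} (hp : SkewRightDvd h p)
    (hh : h ≠ 0) {k : ℕ} (hk : p.natDegree < k + h.natDegree) :
    p ∈ Submodule.span (RatFunc ℝ) (Set.range fun j : Fin k => dMul^[j] h) := by
  obtain ⟨u, rfl⟩ := hp
  rcases eq_or_ne u 0 with rfl | hu
  · rw [skewMul, sum_zero_index]
    exact Submodule.zero_mem _
  have hk' : u.natDegree < k := by
    have := natDegree_add_le_natDegree_skewMul hu hh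
    omega
  rw [skewMul_eq_sum_range u h hk', ← Fin.sum_univ_eq_sum_range (fun i => u.coeff i • dMul^[i] h) k]
  exact Submodule.sum_mem _ fun j _ => Submodule.smul_mem _ _ (Submodule.subset_span ⟨j, rfl⟩)

lemma toRat_dMulP (q : ℝ[X][X]) : toRat (dMulP q) = dMul (toRat q) := by
  ext j
  simp only [toRat, coeff_map, coeff_dMulP, coeff_dMul, map_add, ratDeriv_algebraMap]
  rw [← coeff_map, Polynomial.map_mul, map_X]

lemma toRat_dMulP_iterate (q : ℝ[X][X]) (i : ℕ) : toRat (dMulP^[i] q) = dMul^[i] (toRat q) :=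
  Function.Semiconj.iterate_right toRat_dMulP i q

lemma natDegree_coeff_dMulP_le {q : ℝ[X][X]} {d : ℕ} (hq : ∀ j, (q.coeff j).natDegree ≤ d)
    (j : ℕ) : ((dMulP q).coeff j).natDegree ≤ d := by
  rw [coeff_dMulP]
  refine (natDegree_add_le _ _).trans (max_le ?_ ((natDegree_derivative_le _).trans ?_))
  · cases j with
    | zero => simp
    | succ j => rw [coeff_X_mul]; exact hq j
  · exact (Nat.sub_le _ _).trans (hq j)

lemma natDegree_coeff_dMulP_iterate_le {q : ℝ[X][X]} {d : ℕ}
    (hq : ∀ j, (q.coeff j).natDegree ≤ d) (i j : ℕ) : ((dMulP^[i] q).coeff j).natDegree ≤ d := by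
  induction i generalizing j with
  | zero => exact hq j
  | succ i ih => rw [Function.iterate_succ_apply']; exact natDegree_coeff_dMulP_le ih j

lemma natDegree_sylvP_le {f g : ℝ[X][X]} {m n d : ℕ} (hf : ∀ j, (f.coeff j).natDegree ≤ d)
    (hg : ∀ j, (g.coeff j).natDegree ≤ d) (i j : Fin (m + n)) :
    (sylvP f g m n i j).natDegree ≤ d := by
  rw [sylvP, Matrix.of_apply]
  split_ifs
  · exact natDegree_coeff_dMulP_iterate_le hf _ _
  · exact natDegree_coeff_dMulP_iterate_le hg _ _

lemma map_sylvP_row (f g : ℝ[X][X]) (m n : ℕ) (i : Fin (m + n)) :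
    (sylvP f g m n).map φ i = fun j : Fin (m + n) =>
      (if (i : ℕ) < n then dMul^[i] (toRat f) else dMul^[i - n] (toRat g)).coeff j := by
  ext j
  simp only [Matrix.map_apply, sylvP, Matrix.of_apply, apply_ite (coeff · (j : ℕ))]
  split_ifs <;> rw [← toRat_dMulP_iterate, toRat, coeff_map]

theorem det_sylvP_eq_zero {f g : ℝ[X][X]} {m n : ℕ} (hf₀ : f ≠ 0) (hfm : f.natDegree ≤ m)
    (hgn : g.natDegree ≤ n) {h : (RatFunc ℝ)[X]} (hfh : SkewRightDvd h (toRat f))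
    (hgh : SkewRightDvd h (toRat g)) (hh : 1 ≤ h.degree) : (sylvP f g m n).det = 0 := by
  have hinj := IsFractionRing.injective ℝ[X] (RatFunc ℝ)
  have hh₁ : 1 ≤ h.natDegree := le_natDegree_of_coe_le_degree hh
  have hh₀ : h ≠ 0 := ne_zero_of_natDegree_gt hh₁
  have hfm' : (toRat f).natDegree ≤ m := by rwa [toRat, natDegree_map_eq_of_injective hinj]
  have hgn' : (toRat g).natDegree ≤ n := by rwa [toRat, natDegree_map_eq_of_injective hinj]
  have hm : 1 ≤ m :=
    hh₁.trans ((hfh.natDegree_le ((Polynomial.map_ne_zero_iff hinj).2 hf₀)).trans hfm')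
  set P : Fin (m + n) → (RatFunc ℝ)[X] := fun i =>
    if (i : ℕ) < n then dMul^[i] (toRat f) else dMul^[i - n] (toRat g)
  have hspan : ∀ i, P i ∈ Submodule.span (RatFunc ℝ)
      (Set.range fun j : Fin (m + n - 1) => dMul^[j] h) := by
    intro i
    simp only [P]
    split_ifs with hi
    · exact (hfh.dMul_iterate i).mem_span_dMul_iterate hh₀
        ((natDegree_dMul_iterate_le hfm' i).trans_lt (by omega))
    · exact (hgh.dMul_iterate _).mem_span_dMul_iterate hh₀
        ((natDegree_dMul_iterate_le hgn' _).trans_lt (by omega))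
  have hP : ¬ LinearIndependent (RatFunc ℝ) P := fun hP => by
    have := hP.card_le_of_forall_mem_span hspan
    simp only [Fintype.card_fin] at this
    omega
  have hrows : ¬ LinearIndependent (RatFunc ℝ) fun i => (sylvP f g m n).map φ i := by
    simp only [map_sylvP_row]
    exact fun hV => hP (LinearIndependent.of_comp
      (LinearMap.pi fun j : Fin (m + n) => lcoeff (RatFunc ℝ) j) hV)
  have hdet := Matrix.det_eq_zero_of_not_linearIndependent_rows hrows
  apply hinj
  rw [map_zero, RingHom.map_det]
  exact hdet

/-- If the GCRD is non-trivial there is a polynomial left null vector of V(f,g)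
of degree in t at most 2(m+n)d. -/
theorem exists_poly_left_null_vector (f g : Polynomial (Polynomial ℝ)) (m n d : ℕ)
    (hfd : f.degree = (m : WithBot ℕ)) (hgd : g.degree = (n : WithBot ℕ))
    (hft : ∀ i, (f.coeff i).natDegree ≤ d) (hgt : ∀ i, (g.coeff i).natDegree ≤ d)
    (hG : ∃ h, IsGCRD (toRat f) (toRat g) h ∧ 1 ≤ h.degree) :
    ∃ w : Fin (m + n) → Polynomial ℝ, w ≠ 0 ∧
      Matrix.vecMul w (sylvP f g m n) = 0 ∧
      ∀ i, (w i).natDegree ≤ 2 * (m + n) * d := by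
  obtain ⟨h, ⟨hfh, hgh, -⟩, hh⟩ := hG
  have hf₀ : f ≠ 0 := fun hf => by simp [hf] at hfd
  have hdet := det_sylvP_eq_zero hf₀ (natDegree_le_of_degree_le hfd.le)
    (natDegree_le_of_degree_le hgd.le) hfh hgh hh
  obtain ⟨w, hw₀, hwV, hwd⟩ :=
    Matrix.exists_vecMul_eq_zero_natDegree_le_of_det_eq_zero _ (natDegree_sylvP_le hft hgt) hdet
  refine ⟨w, hw₀, hwV, fun i => (hwd i).trans ?_⟩
  rw [mul_assoc]
  exact Nat.le_mul_of_pos_left _ two_pos
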